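/- arXiv:2105.09661 — 2 statements merged into one kernel-verified Lean document; each statement's English description precedes it below -/
import Mathlib

section
/- In the even case, for every index i ≤ η and every point x ∈ Ω¹ = [a,ξ], the mapped Lagrange basis function converges pointwise to the classical Lagrange basis polynomial of the left node group: lim_{κ→∞} ℓ_i^κ(x) = ∏_{j=0, j≠i}^{η} (x − x_j)/(x_i − x_j). -/
open Filter Finset Real Topology

lemma aux_fac (c d : ℝ) :
    Tendsto (fun κ : ℝ => (c - κ) / (d - κ)) atTop (𝓝 1) := by
  have h1 : Tendsto (fun κ : ℝ => κ - d) atTop atTop :=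
    tendsto_atTop_add_const_right atTop (-d) tendsto_id
  have h2 : Tendsto (fun κ : ℝ => (d - c) / (κ - d)) atTop (𝓝 0) := by
    have := (h1.inv_tendsto_atTop).const_mul (d - c)
    simpa [div_eq_mul_inv] using this
  have h3 : Tendsto (fun κ : ℝ => 1 + (d - c) / (κ - d)) atTop (𝓝 1) := by
    simpa using (tendsto_const_nhds (x := (1 : ℝ))).add h2
  apply h3.congr'
  filter_upwards [eventually_gt_atTop d] with κ hκ
  have hne : κ - d ≠ 0 := by linarith
  have hne' : d - κ ≠ 0 := by linarith
  field_simp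
  ring

theorem stmt_6
    (a b ξ : ℝ) (hab : a < b) (hξ : ξ ∈ Set.Ioo a b)
    (n : ℕ) (hn : Even n) (η : ℕ) (hη : η = n / 2)
    (x : Fin (n + 1) → ℝ) (hmono : StrictMono x)
    (hxΩ : ∀ i, x i ∈ Set.Icc a b)
    (hleft : ∀ i : Fin (n + 1), (i : ℕ) ≤ η → x i ≤ ξ)
    (hright : ∀ i : Fin (n + 1), η < (i : ℕ) → ξ < x i)
    (S : ℝ → ℝ → ℝ)
    (hS : ∀ κ t, S κ t = if t ≤ ξ then t else t + κ)
    (ℓ : ℝ → Fin (n + 1) → ℝ → ℝ)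
    (hℓ : ∀ κ i t, ℓ κ i t =
      ∏ j ∈ Finset.univ.erase i, (S κ t - S κ (x j)) / (S κ (x i) - S κ (x j)))
    (i : Fin (n + 1)) (hi : (i : ℕ) ≤ η)
    (t : ℝ) (ht : t ∈ Set.Icc a ξ) :
    Tendsto (fun κ => ℓ κ i t) atTop
      (𝓝 (∏ j ∈ (Finset.univ.filter (fun j : Fin (n + 1) => (j : ℕ) ≤ η)).erase i,
        (t - x j) / (x i - x j))) := by
  have htξ : t ≤ ξ := ht.2
  have hxi : x i ≤ ξ := hleft i hi
  set A := (Finset.univ.filter (fun j : Fin (n + 1) => (j : ℕ) ≤ η)).erase i with hA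
  set B := Finset.univ.filter (fun j : Fin (n + 1) => ¬ (j : ℕ) ≤ η) with hB
  have hsplit : (Finset.univ.erase i : Finset (Fin (n + 1))) = A ∪ B := by
    ext j
    simp only [hA, hB, Finset.mem_erase, Finset.mem_union, Finset.mem_filter,
      Finset.mem_univ, true_and, and_true]
    by_cases h : (j : ℕ) ≤ η <;> by_cases h2 : j = i <;> simp [h, h2] <;>
      first
        | (intro hji; subst hji; exact h hi)
        | (intro hji; exact absurd hi (hji ▸ h))
        | tauto
  have hdisj : Disjoint A B := by
    simp only [hA, hB, Finset.disjoint_left, Finset.mem_erase, Finset.mem_filter,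
      Finset.mem_univ, true_and]
    rintro j ⟨-, hj⟩ hj'
    exact hj' hj
  have key : ∀ κ : ℝ, ℓ κ i t =
      (∏ j ∈ A, (t - x j) / (x i - x j)) *
      ∏ j ∈ B, (t - x j - κ) / (x i - x j - κ) := by
    intro κ
    rw [hℓ, hsplit, Finset.prod_union hdisj]
    congr 1
    · refine Finset.prod_congr rfl fun j hj => ?_
      have hjη : (j : ℕ) ≤ η := (Finset.mem_filter.1 (Finset.mem_erase.1 hj).2).2
      rw [hS, hS, hS, if_pos htξ, if_pos hxi, if_pos (hleft j hjη)]
    · refine Finset.prod_congr rfl fun j hj => ?_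
      have hjη : ¬ (j : ℕ) ≤ η := (Finset.mem_filter.1 hj).2
      have : ¬ x j ≤ ξ := not_le.2 (hright j (not_le.1 hjη))
      rw [hS, hS, hS, if_pos htξ, if_pos hxi, if_neg this]
      ring_nf
  have hBprod : Tendsto (fun κ : ℝ => ∏ j ∈ B, (t - x j - κ) / (x i - x j - κ))
      atTop (𝓝 1) := by
    have := tendsto_finset_prod (f := fun (j : Fin (n+1)) (κ : ℝ) =>
      (t - x j - κ) / (x i - x j - κ)) B (fun j _ => aux_fac (t - x j) (x i - x j))
    simpa using this
  have : Tendsto (fun κ : ℝ =>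
      (∏ j ∈ A, (t - x j) / (x i - x j)) *
      ∏ j ∈ B, (t - x j - κ) / (x i - x j - κ)) atTop
      (𝓝 (∏ j ∈ A, (t - x j) / (x i - x j))) := by
    simpa using (tendsto_const_nhds.mul hBprod)
  exact this.congr fun κ => (key κ).symm
end

section
/- (Theorem 2, same-interval case) In the multiple-discontinuity setting, for every μ ∈ {1,…,d+1}, every node x_i ∈ X^μ, and every point x ∈ Ω^μ, the mapped Lagrange basis function converges pointwise to the classical Lagrange basis polynomial built only on the nodes of X^μ: lim_{κ→∞} ℓ_i^κ(x) = ∏_{x_j ∈ X^μ, j≠i} (x − x_j)/(x_i − x_j). -/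
open Filter Finset Real Topology

lemma aux_div_shift (A B c κ : ℝ) (hκ : κ ≠ 0) :
    (A + c * κ) / (B + c * κ) = (A / κ + c) / (B / κ + c) := by
  have hB : B / κ + c = (B + c * κ) / κ := by field_simp
  have hA : A / κ + c = (A + c * κ) / κ := by field_simp
  rcases eq_or_ne (B + c * κ) 0 with h0 | h0
  · simp [h0, hB]
  · have h1 : B / κ + c ≠ 0 := by rw [hB]; exact div_ne_zero h0 hκ
    rw [hA, hB]
    field_simp

lemma aux_tendsto_one (A B c : ℝ) (hc : c ≠ 0) :
    Tendsto (fun κ : ℝ => (A + c * κ) / (B + c * κ)) atTop (𝓝 1) := by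
  have hnum : Tendsto (fun κ : ℝ => A / κ + c) atTop (𝓝 (0 + c)) :=
    (tendsto_const_nhds.div_atTop tendsto_id).add tendsto_const_nhds
  have hden : Tendsto (fun κ : ℝ => B / κ + c) atTop (𝓝 (0 + c)) :=
    (tendsto_const_nhds.div_atTop tendsto_id).add tendsto_const_nhds
  have h := hnum.div hden (by simpa using hc)
  have hval : (0 + c) / (0 + c) = 1 := by simp [hc]
  rw [hval] at h
  refine h.congr' ?_
  filter_upwards [eventually_ne_atTop (0 : ℝ)] with κ hκ
  exact (aux_div_shift A B c κ hκ).symm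

theorem stmt_12
    (a b : ℝ) (hab : a < b)
    (d : ℕ) (hd : 2 ≤ d)
    (ξ : ℕ → ℝ) (hξ0 : ξ 0 = a) (hξlast : ξ (d + 1) = b)
    (hξmono : ∀ k ≤ d, ξ k < ξ (k + 1))
    (Reg : ℕ → Set ℝ)
    (hReg : ∀ τ, Reg τ = if τ = 0 then Set.Icc (ξ 0) (ξ 1) else Set.Ioc (ξ τ) (ξ (τ + 1)))
    (n : ℕ) (x : Fin (n + 1) → ℝ) (hmono : StrictMono x)
    (hxΩ : ∀ i, x i ∈ Set.Icc a b)
    (ρ : Fin (n + 1) → ℕ) (hρd : ∀ j, ρ j ≤ d) (hρ : ∀ j, x j ∈ Reg (ρ j))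
    (hne : ∀ τ ≤ d, ∃ j, ρ j = τ)
    (S : ℝ → ℝ → ℝ)
    (hS : ∀ κ t τ, τ ≤ d → t ∈ Reg τ → S κ t = t + (τ : ℝ) * κ)
    (ℓ : ℝ → Fin (n + 1) → ℝ → ℝ)
    (hℓ : ∀ κ i t, ℓ κ i t =
      ∏ j ∈ Finset.univ.erase i, (S κ t - S κ (x j)) / (S κ (x i) - S κ (x j)))
    (μ : ℕ) (hμ : μ ≤ d)
    (i : Fin (n + 1)) (hiμ : ρ i = μ)
    (t : ℝ) (ht : t ∈ Reg μ) :
    Tendsto (fun κ => ℓ κ i t) atTop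
      (𝓝 (∏ j ∈ (Finset.univ.filter (fun j : Fin (n + 1) => ρ j = μ)).erase i,
        (t - x j) / (x i - x j))) := by
  -- rewrite ℓ in explicit form
  have hℓ' : ∀ κ, ℓ κ i t =
      ∏ j ∈ Finset.univ.erase i,
        ((t - x j) + ((μ : ℝ) - (ρ j : ℝ)) * κ) /
        ((x i - x j) + ((μ : ℝ) - (ρ j : ℝ)) * κ) := by
    intro κ
    rw [hℓ]
    refine Finset.prod_congr rfl fun j _ => ?_
    rw [hS κ t μ hμ ht, hS κ (x j) (ρ j) (hρd j) (hρ j),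
        hS κ (x i) (ρ i) (hρd i) (hρ i), hiμ]
    ring_nf
  -- limit value as product over erase i with if-then-else
  set L : Fin (n + 1) → ℝ := fun j => if ρ j = μ then (t - x j) / (x i - x j) else 1 with hL
  have hval : (∏ j ∈ (Finset.univ.filter (fun j : Fin (n + 1) => ρ j = μ)).erase i,
        (t - x j) / (x i - x j)) = ∏ j ∈ Finset.univ.erase i, L j := by
    rw [← Finset.filter_erase, Finset.prod_filter]
  rw [hval]
  refine Tendsto.congr (fun κ => (hℓ' κ).symm) ?_
  refine tendsto_finset_prod _ fun j _ => ?_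
  by_cases hj : ρ j = μ
  · simp only [hL, hj, if_true]
    have h2 : ∀ κ : ℝ, ((t - x j) + ((μ : ℝ) - (μ : ℝ)) * κ) /
        ((x i - x j) + ((μ : ℝ) - (μ : ℝ)) * κ) = (t - x j) / (x i - x j) := by
      intro κ; ring_nf
    exact Tendsto.congr (fun κ => (h2 κ).symm) tendsto_const_nhds
  · have hc : (μ : ℝ) - (ρ j : ℝ) ≠ 0 := by
      intro h
      exact hj (by exact_mod_cast (sub_eq_zero.mp h).symm)
    simp only [hL, hj, if_false]
    exact aux_tendsto_one (t - x j) (x i - x j) _ hc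
end
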